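/- arXiv:1902.09005 — 2 statements merged into one kernel-verified Lean document; each statement's English description precedes it below -/
import Mathlib

section
/- Let (Z_{k,n})_{k,n∈ℕ} be a family of real-valued random variables with CDFs F_{k,n} satisfying assumptions AS1 and AS2. Then the limit lim_{n→∞} ( p-liminf_{k→∞} Z_{k,n} ) exists and equals sup{α ∈ ℝ : lim_{n→∞} limsup_{k→∞} F_{k,n}(α) = 0}. -/
/-!
Write `M n α := limsup_k F_{k,n}(α)`. Along a subsequence realising this limsup, Helly's selection
theorem extracts a further subsequence whose CDFs converge at every point; by AS1 the limit is a
unit step, so `M n α ∈ {0, 1}`. By AS2, `M n` is uniformly within `1/3` of `limsup_k F_k` for all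
large `n`, which forces `M n` to be independent of `n` from some `N` on. Since a sequence in
`[0, 1]` tends to `0` exactly when its limsup vanishes, both `p-liminf_k Z_{k,n}` (for `n > N`)
and the right-hand side equal `sup {α | M N α = 0}`.
-/

open MeasureTheory Filter Topology

/-- The CDF of a real random variable `Z` under the measure `μ`, evaluated at `α`,
using the convention `F(α) = P(Z < α)`. -/
noncomputable def cdfLt {Ω : Type*} [MeasurableSpace Ω] (μ : Measure Ω) (Z : Ω → ℝ)
    (α : ℝ) : ℝ :=
  (μ {ω | Z ω < α}).toReal

/-- The limit-inferior in probability of a sequence of real random variables: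
`p-liminf_{k→∞} Z_k = sup {α ∈ ℝ | lim_{k→∞} P(Z_k < α) = 0}`. -/
noncomputable def pliminf {Ω : Type*} [MeasurableSpace Ω] (μ : Measure Ω)
    (Z : ℕ → Ω → ℝ) : ℝ :=
  sSup {α : ℝ | Tendsto (fun k => cdfLt μ (Z k) α) atTop (nhds 0)}

open Set

section LimsupComparison

variable {ι : Type*} {l : Filter ι} [NeBot l] {u v : ι → ℝ} {η : ℝ}

theorem limsup_le_limsup_add_of_le_add (h : ∀ᶠ i in l, u i ≤ v i + η)
    (hu : l.IsBoundedUnder (· ≥ ·) u) (hv : l.IsBoundedUnder (· ≤ ·) v)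
    (hv' : l.IsBoundedUnder (· ≥ ·) v) :
    limsup u l ≤ limsup v l + η :=
  calc limsup u l ≤ limsup (fun i => v i + η) l :=
        limsup_le_limsup h hu.isCoboundedUnder_le (isBoundedUnder_le_add hv isBoundedUnder_const)
    _ = limsup v l + η := limsup_add_const l v η hv hv'.isCoboundedUnder_le

theorem abs_limsup_sub_limsup_le (h : ∀ᶠ i in l, |u i - v i| ≤ η)
    (hu : l.IsBoundedUnder (· ≤ ·) u) (hu' : l.IsBoundedUnder (· ≥ ·) u)
    (hv : l.IsBoundedUnder (· ≤ ·) v) (hv' : l.IsBoundedUnder (· ≥ ·) v) :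
    |limsup u l - limsup v l| ≤ η := by
  have h₁ := limsup_le_limsup_add_of_le_add
    (h.mono fun i hi => by linarith [(abs_le.1 hi).2]) hu' hv hv'
  have h₂ := limsup_le_limsup_add_of_le_add
    (h.mono fun i hi => by linarith [(abs_le.1 hi).1]) hv' hu hu'
  exact abs_sub_le_iff.2 ⟨by linarith, by linarith⟩

theorem tendsto_zero_iff_limsup_eq_zero (h₀ : ∀ i, 0 ≤ u i)
    (hu : l.IsBoundedUnder (· ≤ ·) u) :
    Tendsto u l (𝓝 0) ↔ limsup u l = 0 := by
  have hu' : l.IsBoundedUnder (· ≥ ·) u := isBoundedUnder_of ⟨0, h₀⟩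
  refine ⟨Tendsto.limsup_eq, fun hsup => tendsto_of_le_liminf_of_limsup_le ?_ hsup.le hu hu'⟩
  exact le_liminf_of_le hu.isCoboundedUnder_ge (Eventually.of_forall h₀)

end LimsupComparison

theorem eq_of_abs_sub_le_of_eq_zero_or_one {x y z : ℝ} (hx : x = 0 ∨ x = 1) (hy : y = 0 ∨ y = 1)
    (hxz : |x - z| ≤ 1 / 3) (hyz : |y - z| ≤ 1 / 3) : x = y := by
  rw [abs_le] at hxz hyz
  rcases hx with rfl | rfl <;> rcases hy with rfl | rfl <;>
    first | rfl | (exfalso; linarith [hxz.1, hxz.2, hyz.1, hyz.2])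

theorem exists_strictMono_forall_tendsto_of_countable {α : Type*} {S : Set α} (hS : S.Countable)
    {a b : ℝ} {f : ℕ → α → ℝ} (hf : ∀ k x, f k x ∈ Icc a b) :
    ∃ φ : ℕ → ℕ, StrictMono φ ∧
      ∀ x ∈ S, ∃ c, Tendsto (fun k => f (φ k) x) atTop (𝓝 c) := by
  have := hS.to_subtype
  obtain ⟨c, φ, hφ, hc⟩ := SeqCompactSpace.tendsto_subseq
    fun k (x : S) => (⟨f k x, hf k x⟩ : Icc a b)
  exact ⟨φ, hφ, fun x hx =>
    ⟨c ⟨x, hx⟩, (continuous_subtype_val.tendsto _).comp (tendsto_pi_nhds.1 hc ⟨x, hx⟩)⟩⟩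

theorem tendsto_of_continuousAt_of_tendsto_rat {f : ℕ → ℝ → ℝ} (hf : ∀ k, Monotone (f k))
    {g : ℚ → ℝ} (hg : ∀ q : ℚ, Tendsto (fun k => f k q) atTop (𝓝 (g q)))
    {G : ℝ → ℝ} (hGg : ∀ (y : ℝ) (q : ℚ), y < q → G y ≤ g q)
    (hgG : ∀ (q : ℚ) (z : ℝ), (q : ℝ) < z → g q ≤ G z) {x : ℝ} (hx : ContinuousAt G x) :
    Tendsto (fun k => f k x) atTop (𝓝 (G x)) := by
  refine tendsto_order.2 ⟨fun a ha => ?_, fun a ha => ?_⟩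
  · obtain ⟨y, hay, hyx⟩ := (((hx.tendsto.mono_left nhdsWithin_le_nhds).eventually
      (lt_mem_nhds ha)).and (self_mem_nhdsWithin (s := Iio x))).exists
    obtain ⟨q, hyq, hqx⟩ := exists_rat_btwn (show y < x from hyx)
    filter_upwards [(hg q).eventually (lt_mem_nhds (hay.trans_le (hGg y q hyq)))] with k hk
    exact hk.trans_le (hf k hqx.le)
  · obtain ⟨z, hza, hxz⟩ := (((hx.tendsto.mono_left nhdsWithin_le_nhds).eventually
      (gt_mem_nhds ha)).and (self_mem_nhdsWithin (s := Ioi x))).exists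
    obtain ⟨q, hxq, hqz⟩ := exists_rat_btwn (show x < z from hxz)
    filter_upwards [(hg q).eventually (gt_mem_nhds ((hgG q z hqz).trans_lt hza))] with k hk
    exact (hf k hxq.le).trans_lt hk

theorem exists_strictMono_forall_tendsto_of_monotone {f : ℕ → ℝ → ℝ} (hf : ∀ k, Monotone (f k))
    {a b : ℝ} (hab : ∀ k x, f k x ∈ Icc a b) :
    ∃ φ : ℕ → ℕ, StrictMono φ ∧ ∃ H : ℝ → ℝ,
      ∀ x, Tendsto (fun k => f (φ k) x) atTop (𝓝 (H x)) := by
  obtain ⟨φ₁, hφ₁, h₁⟩ :=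
    exists_strictMono_forall_tendsto_of_countable (countable_range ((↑) : ℚ → ℝ)) hab
  choose g hg using fun q : ℚ => h₁ q ⟨q, rfl⟩
  have hg_mono : Monotone g := fun q q' hqq' =>
    le_of_tendsto_of_tendsto' (hg q) (hg q') fun k => hf _ (by exact_mod_cast hqq')
  let G : ℝ → ℝ := fun x => sInf (g '' {q | x < q})
  have hne : ∀ x : ℝ, (g '' {q : ℚ | x < q}).Nonempty := fun x =>
    let ⟨q, hq⟩ := exists_rat_gt x; ⟨g q, q, hq, rfl⟩
  have hGg : ∀ (y : ℝ) (q : ℚ), y < q → G y ≤ g q := by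
    intro y q hyq
    obtain ⟨q₀, hq₀⟩ := exists_rat_lt y
    refine csInf_le ⟨g q₀, ?_⟩ ⟨q, hyq, rfl⟩
    rintro _ ⟨q', hq', rfl⟩
    exact hg_mono (by exact_mod_cast (hq₀.trans hq').le)
  have hgG : ∀ (q : ℚ) (z : ℝ), (q : ℝ) < z → g q ≤ G z := fun q z hqz =>
    le_csInf (hne z) fun _ ⟨q', hq', hq'g⟩ => hq'g ▸ hg_mono (by exact_mod_cast (hqz.trans hq').le)
  have hG_mono : Monotone G := fun x y hxy =>
    le_csInf (hne y) fun _ ⟨q, hq, hqg⟩ => hqg ▸ hGg x q (hxy.trans_lt hq)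
  obtain ⟨φ₂, hφ₂, h₂⟩ := exists_strictMono_forall_tendsto_of_countable
    hG_mono.countable_not_continuousAt fun k x => hab (φ₁ k) x
  have hconv : ∀ x, ∃ c, Tendsto (fun k => f (φ₁ (φ₂ k)) x) atTop (𝓝 c) := by
    intro x
    by_cases hx : ContinuousAt G x
    · exact ⟨G x, tendsto_of_continuousAt_of_tendsto_rat (fun k => hf _)
        (fun q => (hg q).comp hφ₂.tendsto_atTop) hGg hgG hx⟩
    · exact h₂ x hx
  choose H hH using hconv
  exact ⟨φ₁ ∘ φ₂, hφ₁.comp hφ₂, H, hH⟩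

theorem exists_strictMono_forall_tendsto_of_monotone_eq_limsup {f : ℕ → ℝ → ℝ}
    (hf : ∀ k, Monotone (f k)) {a b : ℝ} (hab : ∀ k x, f k x ∈ Icc a b) (x₀ : ℝ) :
    ∃ φ : ℕ → ℕ, StrictMono φ ∧ ∃ H : ℝ → ℝ,
      (∀ x, Tendsto (fun k => f (φ k) x) atTop (𝓝 (H x))) ∧
        H x₀ = limsup (fun k => f k x₀) atTop := by
  have hbdd : BddAbove (range fun k => f k x₀) := ⟨b, by rintro _ ⟨k, rfl⟩; exact (hab k x₀).2⟩
  have hbdd' : BddBelow (range fun k => f k x₀) := ⟨a, by rintro _ ⟨k, rfl⟩; exact (hab k x₀).1⟩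
  obtain ⟨ψ, hψ, hψlim⟩ := (MapClusterPt.limsup hbdd'.isBoundedUnder_of_range.isCoboundedUnder_le
    hbdd.isBoundedUnder_of_range).tendsto_subseq
  obtain ⟨φ, hφ, H, hH⟩ :=
    exists_strictMono_forall_tendsto_of_monotone (fun k => hf (ψ k)) fun k => hab (ψ k)
  exact ⟨ψ ∘ φ, hψ.comp hφ, H, hH, tendsto_nhds_unique (hH x₀) (hψlim.comp hφ.tendsto_atTop)⟩

section CDF

variable {Ω : Type*} [MeasurableSpace Ω] {μ : Measure Ω}

theorem cdfLt_nonneg (X : Ω → ℝ) (α : ℝ) : 0 ≤ cdfLt μ X α := ENNReal.toReal_nonneg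

theorem cdfLt_mono [IsFiniteMeasure μ] (X : Ω → ℝ) : Monotone (cdfLt μ X) := fun _ _ hαβ =>
  measureReal_mono fun _ hω => lt_of_lt_of_le hω hαβ

theorem isBoundedUnder_ge_cdfLt {ι : Type*} {l : Filter ι} (X : ι → Ω → ℝ) (α : ℝ) :
    l.IsBoundedUnder (· ≥ ·) fun i => cdfLt μ (X i) α :=
  isBoundedUnder_of ⟨0, fun i => cdfLt_nonneg (X i) α⟩

variable [IsProbabilityMeasure μ]

theorem cdfLt_mem_Icc (X : Ω → ℝ) (α : ℝ) : cdfLt μ X α ∈ Icc 0 1 :=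
  ⟨cdfLt_nonneg X α, measureReal_le_one⟩

theorem isBoundedUnder_le_cdfLt {ι : Type*} {l : Filter ι} (X : ι → Ω → ℝ) (α : ℝ) :
    l.IsBoundedUnder (· ≤ ·) fun i => cdfLt μ (X i) α :=
  isBoundedUnder_of ⟨1, fun i => (cdfLt_mem_Icc (X i) α).2⟩

theorem abs_limsup_cdfLt_sub_limsup_cdfLt_le {X Y : ℕ → Ω → ℝ} {η : ℝ}
    (h : ∀ k α, |cdfLt μ (X k) α - cdfLt μ (Y k) α| ≤ η) (α : ℝ) :
    |limsup (fun k => cdfLt μ (X k) α) atTop - limsup (fun k => cdfLt μ (Y k) α) atTop| ≤ η :=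
  abs_limsup_sub_limsup_le (Eventually.of_forall fun k => h k α) (isBoundedUnder_le_cdfLt X α)
    (isBoundedUnder_ge_cdfLt X α) (isBoundedUnder_le_cdfLt Y α) (isBoundedUnder_ge_cdfLt Y α)

theorem limsup_cdfLt_eq_zero_or_one {X : ℕ → Ω → ℝ}
    (hX : ∀ φ : ℕ → ℕ, StrictMono φ → ∀ G : ℝ → ℝ,
      (∀ α : ℝ, Tendsto (fun l => cdfLt μ (X (φ l)) α) atTop (𝓝 (G α))) →
      ∃ c : ℝ, ∀ α : ℝ, G α = if α ≤ c then 0 else 1) (α : ℝ) :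
    limsup (fun k => cdfLt μ (X k) α) atTop = 0 ∨ limsup (fun k => cdfLt μ (X k) α) atTop = 1 := by
  obtain ⟨φ, hφ, H, hH, hHα⟩ := exists_strictMono_forall_tendsto_of_monotone_eq_limsup
    (fun k => cdfLt_mono (μ := μ) (X k)) (fun k => cdfLt_mem_Icc (X k)) α
  obtain ⟨c, hc⟩ := hX φ hφ H hH
  rw [← hHα, hc α]
  split_ifs <;> simp

end CDF

/-- If the family `(Z_{k,n})` with CDFs `F_{k,n}` satisfies AS1 and AS2
(with limiting random variables `Z_k`), then the limit `lim_{n→∞} (p-liminf_{k→∞} Z_{k,n})`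
exists and equals `sup {α ∈ ℝ | lim_{n→∞} limsup_{k→∞} F_{k,n}(α) = 0}`. -/
theorem stmt4 {Ω : Type*} [MeasurableSpace Ω] (μ : Measure Ω) [IsProbabilityMeasure μ]
    (Z : ℕ → ℕ → Ω → ℝ) (Zlim : ℕ → Ω → ℝ)
    (hAS1 : ∀ n : ℕ, ∀ φ : ℕ → ℕ, StrictMono φ → ∀ G : ℝ → ℝ,
      (∀ α : ℝ, Tendsto (fun l => cdfLt μ (Z (φ l) n) α) atTop (nhds (G α))) →
      ∃ c : ℝ, ∀ α : ℝ, G α = if α ≤ c then 0 else 1)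
    (hAS2 : ∀ η : ℝ, 0 < η → ∃ n₀ : ℕ, ∀ n > n₀, ∀ k : ℕ, ∀ α : ℝ,
      |cdfLt μ (Z k n) α - cdfLt μ (Zlim k) α| < η) :
    Tendsto (fun n => pliminf μ (fun k => Z k n)) atTop
      (nhds (sSup {α : ℝ |
        Tendsto (fun n => Filter.limsup (fun k => cdfLt μ (Z k n) α) atTop) atTop
          (nhds 0)})) := by
  set M : ℕ → ℝ → ℝ := fun n α => limsup (fun k => cdfLt μ (Z k n) α) atTop
  have hM01 : ∀ n α, M n α = 0 ∨ M n α = 1 := fun n => limsup_cdfLt_eq_zero_or_one (hAS1 n)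
  obtain ⟨n₀, hn₀⟩ := hAS2 (1 / 3) (by norm_num)
  have hclose : ∀ n > n₀, ∀ α, |M n α - limsup (fun k => cdfLt μ (Zlim k) α) atTop| ≤ 1 / 3 :=
    fun n hn => abs_limsup_cdfLt_sub_limsup_cdfLt_le fun k α => (hn₀ n hn k α).le
  have hconst : ∀ n > n₀, M n = M (n₀ + 1) := fun n hn => funext fun α =>
    eq_of_abs_sub_le_of_eq_zero_or_one (hM01 n α) (hM01 (n₀ + 1) α) (hclose n hn α)
      (hclose (n₀ + 1) (Nat.lt_succ_self n₀) α)
  have hpliminf : ∀ n > n₀, pliminf μ (fun k => Z k n) = sSup {α | M (n₀ + 1) α = 0} := by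
    intro n hn
    rw [← hconst n hn]
    exact congrArg sSup (Set.ext fun α => tendsto_zero_iff_limsup_eq_zero
      (fun k => cdfLt_nonneg _ α) (isBoundedUnder_le_cdfLt _ α))
  have htarget : {α | Tendsto (fun n => M n α) atTop (𝓝 0)} = {α | M (n₀ + 1) α = 0} := by
    ext α
    have hev : (fun n => M n α) =ᶠ[atTop] fun _ => M (n₀ + 1) α :=
      (eventually_gt_atTop n₀).mono fun n hn => congrFun (hconst n hn) α
    exact (tendsto_congr' hev).trans tendsto_const_nhds_iff
  rw [htarget]
  exact tendsto_const_nhds.congr' ((eventually_gt_atTop n₀).mono fun n hn => (hpliminf n hn).symm)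
end

section
/- Let X and W be independent real-valued zero-mean Gaussian random variables with variances σ_X² > 0 and σ_W² > 0, let Y = X + W and σ_Y² = σ_X² + σ_W². Then the random variables A = Y/σ_Y + W/σ_W and B = Y/σ_Y − W/σ_W are jointly Gaussian, uncorrelated, and independent, and the mutual information density of the scalar Gaussian channel satisfies log( p_{Y|X}(Y|X) / p_Y(Y) ) = (1/2)·A·B + (1/2)·log( σ_Y² / σ_W² ). -/
/-! Independent Gaussians `X`, `W` form a Gaussian vector, hence so does its linear image
`(A, B)`, and `A`, `B` are independent as soon as their covariance vanishes. With `a = 1/σ_Y` and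
`c = 1/σ_W`, `A = aX + (a + c)W` and `B = aX + (a − c)W`, so
`cov(A, B) = a²σ_X² + (a² − c²)σ_W² = a²σ_Y² − c²σ_W² = 0`. The information density identity
is the difference of squares `AB = Y²/σ_Y² − W²/σ_W²` inserted into the logarithms of the two
Gaussian densities. -/

open MeasureTheory ProbabilityTheory
open scoped NNReal

/-- The scalar zero-mean Gaussian density with variance `v`. -/
noncomputable def gpdf (v x : ℝ) : ℝ :=
  (Real.sqrt (2 * Real.pi * v))⁻¹ * Real.exp (-(x ^ 2) / (2 * v))

namespace ProbabilityTheory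

variable {Ω : Type*} {mΩ : MeasurableSpace Ω} {P : Measure Ω} {X W : Ω → ℝ}

lemma HasLaw.variance_eq_of_gaussianReal {m : ℝ} {v : ℝ≥0} (h : HasLaw X (gaussianReal m v) P) :
    Var[X; P] = v := by
  rw [h.variance_eq, variance_id_gaussianReal]

lemma HasGaussianLaw.fun_linearCombination
    (h : HasGaussianLaw (fun ω ↦ (X ω, W ω)) P) (a b : ℝ) :
    HasGaussianLaw (fun ω ↦ a * X ω + b * W ω) P :=
  h.map_fun (a • ContinuousLinearMap.fst ℝ ℝ ℝ + b • ContinuousLinearMap.snd ℝ ℝ ℝ)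

lemma HasGaussianLaw.prodMk_linearCombination
    (h : HasGaussianLaw (fun ω ↦ (X ω, W ω)) P) (a b c d : ℝ) :
    HasGaussianLaw (fun ω ↦ (a * X ω + b * W ω, c * X ω + d * W ω)) P :=
  h.map_fun ((a • ContinuousLinearMap.fst ℝ ℝ ℝ + b • ContinuousLinearMap.snd ℝ ℝ ℝ).prod
    (c • ContinuousLinearMap.fst ℝ ℝ ℝ + d • ContinuousLinearMap.snd ℝ ℝ ℝ))

lemma IndepFun.covariance_linearCombination [IsFiniteMeasure P]
    (hXW : X ⟂ᵢ[P] W) (hX : MemLp X 2 P) (hW : MemLp W 2 P) (a b c d : ℝ) :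
    cov[fun ω ↦ a * X ω + b * W ω, fun ω ↦ c * X ω + d * W ω; P]
      = a * c * Var[X; P] + b * d * Var[W; P] := by
  have hcross : cov[X, W; P] = 0 := hXW.covariance_eq_zero hX hW
  have hcross' : cov[W, X; P] = 0 := by rw [covariance_comm, hcross]
  change cov[(fun ω ↦ a * X ω) + (fun ω ↦ b * W ω), (fun ω ↦ c * X ω) + (fun ω ↦ d * W ω); P] = _
  rw [covariance_add_left (hX.const_mul a) (hW.const_mul b)
      ((hX.const_mul c).add (hW.const_mul d)),
    covariance_add_right (hX.const_mul a) (hX.const_mul c) (hW.const_mul d),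
    covariance_add_right (hW.const_mul b) (hX.const_mul c) (hW.const_mul d)]
  simp only [covariance_const_mul_left, covariance_const_mul_right, hcross, hcross',
    covariance_self hX.aemeasurable, covariance_self hW.aemeasurable]
  ring

lemma IndepFun.indepFun_linearCombination (hXW : X ⟂ᵢ[P] W) (hX : HasGaussianLaw X P) (hW : HasGaussianLaw W P) {a b c d : ℝ}
    (horth : a * c * Var[X; P] + b * d * Var[W; P] = 0) :
    (fun ω ↦ a * X ω + b * W ω) ⟂ᵢ[P] (fun ω ↦ c * X ω + d * W ω) :=
  have := hX.isProbabilityMeasure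
  ((hXW.hasGaussianLaw hX hW).prodMk_linearCombination a b c d).indepFun_of_covariance_eq_zero
    (by rw [hXW.covariance_linearCombination hX.memLp_two hW.memLp_two, horth])

end ProbabilityTheory

lemma gpdf_pos {v : ℝ} (hv : 0 < v) (x : ℝ) : 0 < gpdf v x := by
  unfold gpdf
  positivity

lemma log_gpdf {v : ℝ} (hv : 0 < v) (x : ℝ) :
    Real.log (gpdf v x) = -(x ^ 2 / v + Real.log (2 * Real.pi * v)) / 2 := by
  rw [gpdf, Real.log_mul (by positivity) (Real.exp_ne_zero _), Real.log_inv, Real.log_exp,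
    Real.log_sqrt (by positivity)]
  ring

lemma log_gpdf_div_gpdf {u v : ℝ} (hu : 0 < u) (hv : 0 < v) (w y : ℝ) :
    Real.log (gpdf v w / gpdf u y) = (1 / 2) * ((y / Real.sqrt u + w / Real.sqrt v) *
      (y / Real.sqrt u - w / Real.sqrt v)) + (1 / 2) * Real.log (u / v) := by
  have hsq : (y / Real.sqrt u + w / Real.sqrt v) * (y / Real.sqrt u - w / Real.sqrt v)
      = y ^ 2 / u - w ^ 2 / v := by
    rw [← Real.sq_sqrt hu.le, ← Real.sq_sqrt hv.le, Real.sqrt_sq (Real.sqrt_nonneg u),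
      Real.sqrt_sq (Real.sqrt_nonneg v)]
    ring
  rw [hsq, Real.log_div (gpdf_pos hv w).ne' (gpdf_pos hu y).ne', log_gpdf hv, log_gpdf hu,
    Real.log_div hu.ne' hv.ne', Real.log_mul (by positivity) hu.ne',
    Real.log_mul (by positivity) hv.ne']
  ring

/-- Let `X` and `W` be independent real zero-mean Gaussian random variables
with variances `σ_X² > 0` and `σ_W² > 0`, let `Y = X + W` and `σ_Y² = σ_X² + σ_W²`.  Then
`A = Y/σ_Y + W/σ_W` and `B = Y/σ_Y − W/σ_W` are jointly Gaussian (every linear combination of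
them is Gaussian), uncorrelated, and independent, and the mutual information density of the
scalar Gaussian channel satisfies
`log(p_{Y|X}(Y|X)/p_Y(Y)) = (1/2)·A·B + (1/2)·log(σ_Y²/σ_W²)`,
where `p_{Y|X}(y|x) = p_W(y−x)` is the zero-mean Gaussian density with variance `σ_W²` and
`p_Y` is the zero-mean Gaussian density with variance `σ_Y²`. -/
theorem stmt17 {Ω : Type*} [MeasureSpace Ω] [IsProbabilityMeasure (ℙ : Measure Ω)]
    (X W : Ω → ℝ) (hmX : Measurable X) (hmW : Measurable W)
    (σX2 σW2 : ℝ) (hX2 : 0 < σX2) (hW2 : 0 < σW2)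
    (hX : Measure.map X ℙ = gaussianReal 0 σX2.toNNReal)
    (hW : Measure.map W ℙ = gaussianReal 0 σW2.toNNReal)
    (hXW : IndepFun X W ℙ)
    (σY2 : ℝ) (hσY2 : σY2 = σX2 + σW2)
    (A B : Ω → ℝ)
    (hA : ∀ ω, A ω = (X ω + W ω) / Real.sqrt σY2 + W ω / Real.sqrt σW2)
    (hB : ∀ ω, B ω = (X ω + W ω) / Real.sqrt σY2 - W ω / Real.sqrt σW2) :
    (∀ a b : ℝ, ∃ (m : ℝ) (v : ℝ≥0),
        Measure.map (fun ω => a * A ω + b * B ω) ℙ = gaussianReal m v) ∧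
    (∫ ω, A ω * B ω ∂ℙ) = (∫ ω, A ω ∂ℙ) * (∫ ω, B ω ∂ℙ) ∧
    IndepFun A B ℙ ∧
    (∀ ω, Real.log (gpdf σW2 (W ω) / gpdf σY2 (X ω + W ω)) =
      (1 / 2) * A ω * B ω + (1 / 2) * Real.log (σY2 / σW2)) := by
  have hY2 : 0 < σY2 := by linarith
  set a := (Real.sqrt σY2)⁻¹
  set c := (Real.sqrt σW2)⁻¹
  have hA' : A = fun ω ↦ a * X ω + (a + c) * W ω := funext fun ω ↦ by rw [hA ω]; ring
  have hB' : B = fun ω ↦ a * X ω + (a - c) * W ω := funext fun ω ↦ by rw [hB ω]; ring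
  have hXlaw : HasLaw X (gaussianReal 0 σX2.toNNReal) ℙ := ⟨hmX.aemeasurable, hX⟩
  have hWlaw : HasLaw W (gaussianReal 0 σW2.toNNReal) ℙ := ⟨hmW.aemeasurable, hW⟩
  have hABgauss : HasGaussianLaw (fun ω ↦ (A ω, B ω)) ℙ := by
    rw [hA', hB']
    exact (hXW.hasGaussianLaw hXlaw.hasGaussianLaw hWlaw.hasGaussianLaw).prodMk_linearCombination
      _ _ _ _
  have hindep : IndepFun A B ℙ := by
    rw [hA', hB']
    refine hXW.indepFun_linearCombination hXlaw.hasGaussianLaw hWlaw.hasGaussianLaw ?_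
    rw [hXlaw.variance_eq_of_gaussianReal, hWlaw.variance_eq_of_gaussianReal,
      Real.coe_toNNReal _ hX2.le, Real.coe_toNNReal _ hW2.le]
    calc a * a * σX2 + (a + c) * (a - c) * σW2 = a ^ 2 * (σX2 + σW2) - c ^ 2 * σW2 := by ring
      _ = 0 := by
        rw [inv_pow, inv_pow, Real.sq_sqrt hY2.le, Real.sq_sqrt hW2.le, ← hσY2,
          inv_mul_cancel₀ hY2.ne', inv_mul_cancel₀ hW2.ne', sub_self]
  refine ⟨fun s t ↦ ⟨_, _, (hABgauss.fun_linearCombination s t).map_eq_gaussianReal⟩,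
    hindep.integral_fun_mul_eq_mul_integral hABgauss.fst.aemeasurable.aestronglyMeasurable
      hABgauss.snd.aemeasurable.aestronglyMeasurable,
    hindep, fun ω ↦ ?_⟩
  rw [hA ω, hB ω, log_gpdf_div_gpdf hY2 hW2]
  ring
end
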